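/- arXiv:1311.1464 — 3 statements merged into one kernel-verified Lean document; each statement's English description precedes it below -/
import Mathlib

section
/- With φ_P as above, for any two formal power series P, Q ∈ X·Q[[X]], the composition φ_P ∘ φ_Q equals φ_{P∘Q}, where P∘Q is the substitution of formal power series. -/
open PowerSeries

variable {A : Type*} [NonUnitalCommRing A] [Module ℚ A]
  [SMulCommClass ℚ A A] [IsScalarTower ℚ A A]

/-- `φ_P` on a basis word. -/
noncomputable def phiW (p : ℕ → ℚ) : List A → (List A →₀ ℚ)
  | [] => Finsupp.single [] 1
  | a :: w => ∑ i ∈ Finset.range (w.length + 1),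
      p (i + 1) • (phiW p (w.drop i)).mapDomain
        (List.cons ((w.take i).foldl (· * ·) a))
termination_by l => l.length
decreasing_by all_goals (simp [List.length_cons]; try omega)

/-- Linear extension of `φ_P` to `T(A)`. -/
noncomputable def phi (p : ℕ → ℚ) (x : List A →₀ ℚ) : List A →₀ ℚ :=
  x.sum fun w c => c • phiW p w

/-- Substitution of formal power series. -/
noncomputable def comp (P Q : PowerSeries ℚ) : PowerSeries ℚ :=
  PowerSeries.mk fun n => ∑ i ∈ Finset.range (n + 1),
    PowerSeries.coeff i P * PowerSeries.coeff n (Q ^ i)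

/-!
Applying `φ_p` to a term of `φ_q(w)` glues consecutive blocks of `φ_q` into blocks of `φ_p`. To
induct on the word, keep the first block of `φ_p` open, weighted by an arbitrary sequence `s`
instead of `p (· + 1)`. Gluing one more `q`-block onto an open block replaces its weights by their
Cauchy product with `q (· + 1)`, while closing it costs `s 0`. Since `q 0 = 0`, the composite
satisfies `S ∘ Q = s₀ + Q · (S' ∘ Q)` with `S'` the shift of `S`, which is the same recursion; so
the weights produced are the coefficients of `P ∘ Q`.
-/

lemma PowerSeries.coeff_pow_eq_zero_of_lt {R : Type*} [CommSemiring R] {Q : PowerSeries R}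
    (hQ : constantCoeff Q = 0) {n j : ℕ} (h : n < j) : coeff n (Q ^ j) = 0 :=
  X_pow_dvd_iff.mp (pow_dvd_pow_of_dvd (X_dvd_iff.mpr hQ) j) n h

lemma coeff_comp_eq_coeff_sum {P Q : PowerSeries ℚ} (hQ : constantCoeff Q = 0) {n N : ℕ}
    (h : n < N) :
    coeff n (comp P Q) = coeff n (∑ j ∈ Finset.range N, C (coeff j P) * Q ^ j) := by
  rw [comp, coeff_mk, map_sum]
  simp only [coeff_C_mul]
  refine Finset.sum_subset (Finset.range_subset_range.mpr h) fun j _ hj => ?_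
  rw [coeff_pow_eq_zero_of_lt hQ (by simpa using hj), mul_zero]

noncomputable def compSeq (s q : ℕ → ℚ) (n : ℕ) : ℚ :=
  coeff n (comp (mk s) (mk q))

lemma compSeq_zero (s q : ℕ → ℚ) : compSeq s q 0 = s 0 := by
  simp [compSeq, comp]

lemma compSeq_succ (s : ℕ → ℚ) {q : ℕ → ℚ} (hq : q 0 = 0) (m : ℕ) :
    compSeq s q (m + 1) =
      ∑ i ∈ Finset.range (m + 1), q (i + 1) * compSeq (fun j => s (j + 1)) q (m - i) := by
  have hQ : constantCoeff (mk q) = 0 := by simpa using hq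
  have hsplit : ∑ j ∈ Finset.range (m + 2), C (s j) * mk q ^ j =
      C (s 0) + mk q * ∑ j ∈ Finset.range (m + 1), C (s (j + 1)) * mk q ^ j := by
    rw [Finset.sum_range_succ', Finset.mul_sum, add_comm]
    simp only [pow_zero, mul_one, pow_succ']
    congr 1
    exact Finset.sum_congr rfl fun j _ => by ring
  rw [compSeq, coeff_comp_eq_coeff_sum hQ (Nat.lt_succ_self _)]
  simp only [coeff_mk]
  rw [hsplit, map_add, coeff_C, if_neg (Nat.succ_ne_zero m), zero_add, coeff_mul,
    Finset.Nat.sum_antidiagonal_succ, coeff_mk, hq, zero_mul, zero_add,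
    Finset.Nat.sum_antidiagonal_eq_sum_range_succ_mk]
  refine Finset.sum_congr rfl fun i _ => ?_
  rw [coeff_mk, compSeq, coeff_comp_eq_coeff_sum hQ (by omega : m - i < m + 1)]
  simp only [coeff_mk]

section

variable {R : Type*} [NonUnitalCommRing R]

/-- `φ_p` of the word `b :: v`, except that the first block `b * v₀ * ⋯ * v_{j-1}` is weighted by
`s j` instead of `p (j + 1)`. -/
noncomputable def phiHead (p s : ℕ → ℚ) (b : R) (v : List R) : List R →₀ ℚ :=
  ∑ j ∈ Finset.range (v.length + 1),
    s j • (phiW p (v.drop j)).mapDomain (List.cons ((v.take j).foldl (· * ·) b))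

lemma phiW_nil (p : ℕ → ℚ) : phiW (A := R) p [] = Finsupp.single [] 1 := by
  rw [phiW]

lemma phiW_cons (p : ℕ → ℚ) (a : R) (w : List R) :
    phiW p (a :: w) = phiHead p (fun j => p (j + 1)) a w := by
  rw [phiW, phiHead]

lemma phiHead_nil (p s : ℕ → ℚ) (b : R) :
    phiHead p s b [] = s 0 • Finsupp.single [b] 1 := by
  simp [phiHead, phiW_nil]

lemma phiHead_cons (p s : ℕ → ℚ) (b c : R) (v : List R) :
    phiHead p s b (c :: v) =
      s 0 • (phiW p (c :: v)).mapDomain (List.cons b) + phiHead p (fun j => s (j + 1)) (b * c) v := by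
  rw [phiHead, phiHead, List.length_cons, Finset.sum_range_succ', add_comm]
  rfl

noncomputable def phiLin (p : ℕ → ℚ) : (List R →₀ ℚ) →ₗ[ℚ] List R →₀ ℚ :=
  Finsupp.linearCombination ℚ (phiW p)

noncomputable def phiHeadLin (p s : ℕ → ℚ) (b : R) : (List R →₀ ℚ) →ₗ[ℚ] List R →₀ ℚ :=
  Finsupp.linearCombination ℚ (phiHead p s b)

lemma phi_eq_phiLin (p : ℕ → ℚ) (x : List R →₀ ℚ) : phi p x = phiLin p x := by
  rw [phi, phiLin, Finsupp.linearCombination_apply]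

lemma phiLin_single (p : ℕ → ℚ) (w : List R) (c : ℚ) :
    phiLin p (Finsupp.single w c) = c • phiW p w :=
  Finsupp.linearCombination_single ℚ c w

lemma phiLin_mapDomain_cons (p : ℕ → ℚ) (b : R) (x : List R →₀ ℚ) :
    phiLin p (x.mapDomain (List.cons b)) = phiHeadLin p (fun j => p (j + 1)) b x := by
  rw [phiLin, Finsupp.linearCombination_mapDomain, phiHeadLin,
    show phiW p ∘ List.cons b = _ from funext (phiW_cons p b)]

lemma phiHeadLin_mapDomain_cons (p s : ℕ → ℚ) (b c : R) (y : List R →₀ ℚ) :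
    phiHeadLin p s b (y.mapDomain (List.cons c)) =
      s 0 • (phiHeadLin p (fun j => p (j + 1)) c y).mapDomain (List.cons b)
        + phiHeadLin p (fun j => s (j + 1)) (b * c) y := by
  induction y using Finsupp.induction_linear with
  | zero => simp
  | add f g hf hg =>
    simp only [Finsupp.mapDomain_add, map_add, smul_add, hf, hg]
    abel
  | single v k =>
    simp only [Finsupp.mapDomain_single, phiHeadLin, Finsupp.linearCombination_single,
      phiHead_cons, ← phiW_cons, Finsupp.mapDomain_smul, smul_add, smul_smul, mul_comm]

lemma sum_smul_phiHead (q r t : ℕ → ℚ) (c : R) (u : List R) :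
    ∑ i ∈ Finset.range (u.length + 1),
        q (i + 1) • phiHead r t ((u.take i).foldl (· * ·) c) (u.drop i) =
      phiHead r (fun m => ∑ i ∈ Finset.range (m + 1), q (i + 1) * t (m - i)) c u := by
  have hblock : ∀ i ∈ Finset.range (u.length + 1),
      q (i + 1) • phiHead r t ((u.take i).foldl (· * ·) c) (u.drop i) =
        ∑ j ∈ Finset.range (u.length + 1 - i), q (i + 1) • t j •
          (phiW r (u.drop (i + j))).mapDomain (List.cons ((u.take (i + j)).foldl (· * ·) c)) := by
    intro i hi
    rw [phiHead, Finset.smul_sum, List.length_drop, Nat.sub_add_comm (by simpa using hi)]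
    simp only [List.drop_drop, List.take_add, List.foldl_append]
  rw [Finset.sum_congr rfl hblock, ← Finset.sum_range_diag_flip, phiHead]
  refine Finset.sum_congr rfl fun m _ => ?_
  rw [Finset.sum_smul]
  refine Finset.sum_congr rfl fun i hi => ?_
  rw [Nat.add_sub_cancel' (by simpa [Nat.lt_succ_iff] using hi), smul_smul]

lemma phiLin_phiW_cons (p q : ℕ → ℚ) (a : R) (u : List R) :
    phiLin p (phiW q (a :: u)) =
      ∑ i ∈ Finset.range (u.length + 1), q (i + 1) •
        phiHeadLin p (fun j => p (j + 1)) ((u.take i).foldl (· * ·) a) (phiW q (u.drop i)) := by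
  rw [phiW_cons, phiHead, map_sum]
  simp only [map_smul, phiLin_mapDomain_cons]

lemma phiLin_phiW_cons_of_phiHeadLin (p : ℕ → ℚ) {q : ℕ → ℚ} (hq : q 0 = 0) (a : R)
    (u : List R) (h : ∀ i s b, phiHeadLin p s b (phiW q (u.drop i)) =
      phiHead (compSeq p q) (compSeq s q) b (u.drop i)) :
    phiLin p (phiW q (a :: u)) = phiW (compSeq p q) (a :: u) := by
  rw [phiLin_phiW_cons]
  simp only [h]
  rw [sum_smul_phiHead, phiW_cons]
  simp only [compSeq_succ p hq]

theorem phiHeadLin_phiW (p : ℕ → ℚ) {q : ℕ → ℚ} (hq : q 0 = 0) :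
    ∀ (u : List R) (s : ℕ → ℚ) (b : R),
      phiHeadLin p s b (phiW q u) = phiHead (compSeq p q) (compSeq s q) b u
  | [], s, b => by
    simp [phiW_nil, phiHeadLin, phiHead_nil, compSeq_zero]
  | a :: u, s, b => by
    have ih := fun i => phiHeadLin_phiW p hq (u.drop i)
    rw [phiW_cons, phiHead, map_sum]
    simp only [map_smul, phiHeadLin_mapDomain_cons, smul_add, Finset.sum_add_distrib]
    rw [phiHead_cons, compSeq_zero]
    congr 1
    -- the open block closes at once, leaving `φ_p (φ_q (a :: u))`, known from the shorter words
    · rw [← phiLin_phiW_cons_of_phiHeadLin p hq a u ih, phiLin_phiW_cons,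
        Finsupp.mapDomain_finsetSum, Finset.smul_sum]
      simp only [Finsupp.mapDomain_smul, smul_comm (s 0)]
    · simp only [ih, ← List.foldl_assoc, sum_smul_phiHead, compSeq_succ s hq]
termination_by u => u.length
decreasing_by simp

theorem phiLin_phiW (p : ℕ → ℚ) {q : ℕ → ℚ} (hq : q 0 = 0) :
    ∀ u : List R, phiLin p (phiW q u) = phiW (compSeq p q) u
  | [] => by simp [phiW_nil, phiLin]
  | a :: u => phiLin_phiW_cons_of_phiHeadLin p hq a u fun i => phiHeadLin_phiW p hq (u.drop i)

end

theorem phi_comp_general (p q : ℕ → ℚ) (hq : q 0 = 0) (x : List A →₀ ℚ) :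
    phi p (phi q x) =
      phi (fun n => PowerSeries.coeff n
        (comp (PowerSeries.mk p) (PowerSeries.mk q))) x := by
  simp only [phi_eq_phiLin, ← LinearMap.comp_apply]
  congr 1
  refine Finsupp.lhom_ext fun w c => ?_
  rw [LinearMap.comp_apply, phiLin_single, phiLin_single, map_smul, phiLin_phiW p hq]
  rfl

/-- `φ_P ∘ φ_Q = φ_{P∘Q}` for `P, Q ∈ X·ℚ[[X]]`. -/
theorem phi_comp (p q : ℕ → ℚ) (hp : p 0 = 0) (hq : q 0 = 0) (x : List A →₀ ℚ) :
    phi p (phi q x) =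
      phi (fun n => PowerSeries.coeff n
        (comp (PowerSeries.mk p) (PowerSeries.mk q))) x :=
  phi_comp_general p q hq x
end

section
/- If P(X) = X + Σ_{i≥2} p_i X^i is tangent to identity, then φ_P : T(A) → T(A) is a linear bijection. -/
/-!
On a word `w`, `φ_P w` is `w` itself (from the term `k = n`, all blocks of size one, with
coefficient `p₁ⁿ = 1`) plus a combination of strictly shorter words. So `φ_P` is unitriangular
for the grading of `T(A)` by word length, and any such map on a free module is bijective:
injective by looking at a longest word in the support, surjective by induction on the length.
-/

variable {A : Type*} [NonUnitalCommRing A] [Module ℚ A]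
  [SMulCommClass ℚ A A] [IsScalarTower ℚ A A]

namespace Finsupp

variable {ι κ R : Type*} [Ring R] [LinearOrder κ]

theorem injective_linearCombination_of_unitriangular (rank : ι → κ) (g : ι → ι →₀ R)
    (hg : ∀ w u, rank w ≤ rank u → g w u = single w 1 u) :
    Function.Injective (linearCombination R g) := by
  classical
  rw [← LinearMap.ker_eq_bot, LinearMap.ker_eq_bot']
  intro x hx
  by_contra hx0
  obtain ⟨u, hu, hmax⟩ := x.support.exists_max_image rank (support_nonempty_iff.mpr hx0)
  have hleading : linearCombination R g x u = x u := by
    rw [linearCombination_apply, Finsupp.sum, finsetSum_apply]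
    calc ∑ w ∈ x.support, (x w • g w) u = ∑ w ∈ x.support, x w * single w 1 u :=
          Finset.sum_congr rfl fun w hw => by rw [smul_apply, smul_eq_mul, hg w u (hmax w hw)]
      _ = x u := by
          rw [Finset.sum_eq_single_of_mem u hu fun w _ hwu => by simp [hwu]]
          simp
  exact mem_support_iff.mp hu (by rw [← hleading, hx, zero_apply])

theorem surjective_linearCombination_of_unitriangular [WellFoundedLT κ] (rank : ι → κ)
    (g : ι → ι →₀ R) (hg : ∀ w u, rank w ≤ rank u → g w u = single w 1 u) :
    Function.Surjective (linearCombination R g) := by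
  rw [← LinearMap.range_eq_top, eq_top_iff, ← Module.Basis.span_eq Finsupp.basisSingleOne,
    Submodule.span_le, Set.range_subset_iff]
  intro w
  simp only [coe_basisSingleOne, SetLike.mem_coe]
  induction w using (InvImage.wf rank wellFounded_lt).induction with
  | _ w ih =>
  set e := g w - single w 1
  have he : ∀ u ∈ e.support, rank u < rank w := fun u hu =>
    lt_of_not_ge fun h => mem_support_iff.mp hu (by simp [e, hg w u h])
  have he_mem : e ∈ LinearMap.range (linearCombination R g) := by
    rw [← e.sum_single]
    refine Submodule.sum_mem _ fun u hu => ?_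
    rw [← smul_single_one]
    exact Submodule.smul_mem _ _ (ih u (he u hu))
  rw [← sub_sub_cancel (g w) (single w 1)]
  exact sub_mem ⟨single w 1, by simp⟩ he_mem

theorem bijective_linearCombination_of_unitriangular [WellFoundedLT κ] (rank : ι → κ)
    (g : ι → ι →₀ R) (hg : ∀ w u, rank w ≤ rank u → g w u = single w 1 u) :
    Function.Bijective (linearCombination R g) :=
  ⟨injective_linearCombination_of_unitriangular rank g hg,
    surjective_linearCombination_of_unitriangular rank g hg⟩

end Finsupp

section

omit [Module ℚ A] [SMulCommClass ℚ A A] [IsScalarTower ℚ A A]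

theorem length_le_of_mem_support_phiW (p : ℕ → ℚ) {w u : List A}
    (hu : u ∈ (phiW p w).support) : u.length ≤ w.length := by
  classical
  induction w using phiW.induct generalizing u with
  | case1 =>
    rw [phiW, Finsupp.support_single _ one_ne_zero, Finset.mem_singleton] at hu
    rw [hu]
  | case2 a w ih =>
    rw [phiW] at hu
    obtain ⟨i, -, hi⟩ := Finset.mem_biUnion.mp (Finsupp.support_finsetSum hu)
    obtain ⟨t, ht, rfl⟩ :=
      Finset.mem_image.mp (Finsupp.mapDomain_support (Finsupp.support_smul hi))
    have := ih i ht
    simp only [List.length_cons, List.length_drop] at this ⊢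
    omega

theorem phiW_apply_of_length_le (p : ℕ → ℚ) (hp1 : p 1 = 1) {w u : List A}
    (h : w.length ≤ u.length) : phiW p w u = Finsupp.single w 1 u := by
  classical
  induction w using phiW.induct generalizing u with
  | case1 => rw [phiW]
  | case2 a w ih =>
    have hshorter : ∀ i ∈ Finset.range (w.length + 1), i ≠ 0 →
        (p (i + 1) • (phiW p (w.drop i)).mapDomain
          (List.cons ((w.take i).foldl (· * ·) a))) u = 0 := by
      intro i hi hi0
      refine Finsupp.notMem_support_iff.mp fun hu => ?_
      obtain ⟨t, ht, rfl⟩ :=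
        Finset.mem_image.mp (Finsupp.mapDomain_support (Finsupp.support_smul hu))
      have := length_le_of_mem_support_phiW p ht
      simp only [List.length_cons, List.length_drop, Finset.mem_range] at h hi this
      omega
    rw [phiW, Finsupp.finsetSum_apply, Finset.sum_eq_single_of_mem 0 (by simp) hshorter]
    simp only [hp1, one_smul, List.take_zero, List.foldl_nil, List.drop_zero]
    by_cases hu : ∃ t, u = a :: t
    · obtain ⟨t, rfl⟩ := hu
      rw [Finsupp.mapDomain_apply List.cons_injective]
      simpa [Finsupp.single_apply] using ih 0 (u := t) (by simpa using h)
    · rw [Finsupp.mapDomain_of_notMem_range _ _ fun ⟨t, ht⟩ => hu ⟨t, ht.symm⟩,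
        Finsupp.single_eq_of_ne fun h => hu ⟨w, h⟩]

end

theorem phi_linear_bijective_general (p : ℕ → ℚ) (hp1 : p 1 = 1) :
    ∃ e : (List A →₀ ℚ) ≃ₗ[ℚ] (List A →₀ ℚ), ∀ x, e x = phi p x :=
  ⟨.ofBijective _ <| Finsupp.bijective_linearCombination_of_unitriangular List.length (phiW p)
      fun _ _ => phiW_apply_of_length_le p hp1,
    Finsupp.linearCombination_apply ℚ⟩

/-- If `P = X + Σ_{i≥2} p_i X^i` is tangent to identity, then
`φ_P : T(A) → T(A)` is a linear bijection. -/
theorem phi_linear_bijective (p : ℕ → ℚ) (hp0 : p 0 = 0) (hp1 : p 1 = 1) :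
    ∃ e : (List A →₀ ℚ) ≃ₗ[ℚ] (List A →₀ ℚ), ∀ x, e x = phi p x :=
  phi_linear_bijective_general p hp1
end

section
/- For the exponential series E₁(X) = e^X − 1, the map φ_{E₁} : T(A) → T(A) (the Hoffman isomorphism) intertwines the shuffle product and the quasi-shuffle product: φ_{E₁}(x ⧢ y) = φ_{E₁}(x) ⋆ φ_{E₁}(y) for all x, y ∈ T(A). -/
variable {A : Type*} [NonUnitalCommRing A] [Module ℚ A]
  [SMulCommClass ℚ A A] [IsScalarTower ℚ A A]

/-- The shuffle product of two basis words. -/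
noncomputable def shW : List A → List A → (List A →₀ ℚ)
  | [], v => Finsupp.single v 1
  | a :: w, [] => Finsupp.single (a :: w) 1
  | a :: w, b :: v =>
      (shW w (b :: v)).mapDomain (a :: ·) + (shW (a :: w) v).mapDomain (b :: ·)
termination_by u v => u.length + v.length
decreasing_by all_goals simp [List.length_cons]

/-- Bilinear extension of the shuffle product. -/
noncomputable def shL (x y : List A →₀ ℚ) : List A →₀ ℚ :=
  x.sum fun u c => y.sum fun v d => (c * d) • shW u v

/-- The quasi-shuffle product of two basis words. -/
noncomputable def qshW : List A → List A → (List A →₀ ℚ)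
  | [], v => Finsupp.single v 1
  | a :: w, [] => Finsupp.single (a :: w) 1
  | a :: w, b :: v =>
      (qshW w (b :: v)).mapDomain (a :: ·) + (qshW (a :: w) v).mapDomain (b :: ·)
        + (qshW w v).mapDomain ((a * b) :: ·)
termination_by u v => u.length + v.length
decreasing_by
  all_goals simp [List.length_cons]
  all_goals omega

/-- Bilinear extension of the quasi-shuffle product. -/
noncomputable def qshL (x y : List A →₀ ℚ) : List A →₀ ℚ :=
  x.sum fun u c => y.sum fun v d => (c * d) • qshW u v

open Finset

/-!
Write `φ(a w)` as a sum over the length of its first block. Expanding `φ(a w) ⋆ φ(b t)` by the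
recursion of `⋆`, every term starts with a block of `a w`, a block of `b t`, or the product of one
of each (`firstBlockSum`). The same expansion holds for `φ(a w ⧢ b t)`: a first block of a shuffle
takes `i` letters of `a w` and `j` letters of `b t`, which interleave in `C(i+j, i)` ways, all with
the same product since `A` is commutative; with weights `p n = 1/n!` this count turns
`p (i + j)` into `p i * p j`. Induction on the total length concludes.
-/

theorem Nat.choose_succ_add_succ (i j : ℕ) :
    (i + 1 + (j + 1)).choose (i + 1) = (i + (j + 1)).choose i + (i + 1 + j).choose (i + 1) := by
  rw [show i + 1 + (j + 1) = i + (j + 1) + 1 by omega, Nat.choose_succ_succ',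
    show i + (j + 1) = i + 1 + j by omega]

theorem Finset.sum_range_choose_smul_pascal {M : Type*} [AddCommMonoid M] (f : ℕ → ℕ → M)
    (m n : ℕ) :
    ∑ i ∈ range (m + 1), ∑ j ∈ range (n + 1), (i + j).choose i • f i j =
      f 0 0 + ∑ i ∈ range m, ∑ j ∈ range (n + 1), (i + j).choose i • f (i + 1) j
        + ∑ i ∈ range (m + 1), ∑ j ∈ range n, (i + j).choose i • f i (j + 1) := by
  simp only [sum_range_succ', Nat.choose_succ_add_succ, add_smul, sum_add_distrib,
    Nat.choose_zero_right, Nat.choose_self, zero_add, add_zero]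
  abel

theorem List.foldl_mul_mul_right {R : Type*} [CommSemigroup R] (l : List R) (x y : R) :
    l.foldl (· * ·) (x * y) = l.foldl (· * ·) x * y := by
  rw [mul_comm, List.foldl_assoc, mul_comm]

theorem List.foldl_mul_append_cons {R : Type*} [CommSemigroup R] (l l' : List R) (b c : R) :
    (l ++ b :: l').foldl (· * ·) c = (l ++ l').foldl (· * ·) (c * b) := by
  simp only [List.foldl_append, List.foldl_cons, List.foldl_mul_mul_right]

theorem List.foldl_mul_append {R : Type*} [CommSemigroup R] (l l' : List R) (x y : R) :
    (l ++ l').foldl (· * ·) (x * y) = l.foldl (· * ·) x * l'.foldl (· * ·) y := by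
  rw [List.foldl_append, List.foldl_mul_mul_right, List.foldl_assoc]

theorem Nat.cast_add_choose_mul_inv_factorial {K : Type*} [Field K] [CharZero K] (i j : ℕ) :
    ((i + j).choose i : K) * ((i + j).factorial : K)⁻¹ =
      (i.factorial : K)⁻¹ * (j.factorial : K)⁻¹ := by
  have hfact : ((i + j).factorial : K) ≠ 0 := Nat.cast_ne_zero.mpr (Nat.factorial_ne_zero _)
  rw [Nat.cast_add_choose]
  field_simp

section

omit [Module ℚ A] [SMulCommClass ℚ A A] [IsScalarTower ℚ A A]

noncomputable def consₗ {α : Type*} (c : α) : (List α →₀ ℚ) →ₗ[ℚ] List α →₀ ℚ :=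
  Finsupp.lmapDomain ℚ ℚ (List.cons c)

noncomputable def phiₗ (p : ℕ → ℚ) : (List A →₀ ℚ) →ₗ[ℚ] List A →₀ ℚ :=
  Finsupp.linearCombination ℚ (phiW p)

noncomputable def shₗ {α : Type*} : (List α →₀ ℚ) →ₗ[ℚ] (List α →₀ ℚ) →ₗ[ℚ] List α →₀ ℚ :=
  Finsupp.linearCombination ℚ fun u => Finsupp.linearCombination ℚ (shW u)

noncomputable def qshₗ : (List A →₀ ℚ) →ₗ[ℚ] (List A →₀ ℚ) →ₗ[ℚ] List A →₀ ℚ :=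
  Finsupp.linearCombination ℚ fun u => Finsupp.linearCombination ℚ (qshW u)

theorem phi_eq_phiₗ (p : ℕ → ℚ) (x : List A →₀ ℚ) : phi p x = phiₗ p x := rfl

theorem shL_eq_shₗ {α : Type*} (x y : List α →₀ ℚ) : shL x y = shₗ x y := by
  simp only [shL, shₗ, Finsupp.linearCombination_apply, LinearMap.finsupp_sum_apply,
    LinearMap.smul_apply, Finsupp.smul_sum, smul_smul]

theorem qshL_eq_qshₗ (x y : List A →₀ ℚ) : qshL x y = qshₗ x y := by
  simp only [qshL, qshₗ, Finsupp.linearCombination_apply, LinearMap.finsupp_sum_apply,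
    LinearMap.smul_apply, Finsupp.smul_sum, smul_smul]

@[simp]
theorem phiₗ_single (p : ℕ → ℚ) (u : List A) (c : ℚ) :
    phiₗ p (Finsupp.single u c) = c • phiW p u := by
  simp [phiₗ]

theorem qshₗ_single_single (u v : List A) (c d : ℚ) :
    qshₗ (Finsupp.single u c) (Finsupp.single v d) = (c * d) • qshW u v := by
  simp [qshₗ, smul_smul]

theorem consₗ_single {α : Type*} (c : α) (u : List α) (d : ℚ) :
    consₗ c (Finsupp.single u d) = Finsupp.single (c :: u) d := by
  simp [consₗ]

theorem phiW_cons_s11 (p : ℕ → ℚ) (a : A) (w : List A) :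
    phiW p (a :: w) = ∑ i ∈ range (w.length + 1),
      p (i + 1) • consₗ ((w.take i).foldl (· * ·) a) (phiW p (w.drop i)) := by
  rw [phiW]; rfl

theorem shW_cons_cons {α : Type*} (a b : α) (w t : List α) :
    shW (a :: w) (b :: t) = consₗ a (shW w (b :: t)) + consₗ b (shW (a :: w) t) := by
  rw [shW]; rfl

theorem shW_nil_right {α : Type*} (u : List α) : shW u [] = Finsupp.single u 1 := by
  cases u <;> rw [shW]

theorem qshₗ_single_nil_left (Y : List A →₀ ℚ) : qshₗ (Finsupp.single [] 1) Y = Y := by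
  induction Y using Finsupp.induction_linear with
  | zero => simp
  | add Y Y' hY hY' => rw [map_add, hY, hY']
  | single v d => rw [qshₗ_single_single, qshW, one_mul, Finsupp.smul_single_one]

theorem qshₗ_single_nil_right (X : List A →₀ ℚ) : qshₗ X (Finsupp.single [] 1) = X := by
  induction X using Finsupp.induction_linear with
  | zero => simp
  | add X X' hX hX' => rw [map_add, LinearMap.add_apply, hX, hX']
  | single u c => cases u <;> rw [qshₗ_single_single, qshW, mul_one, Finsupp.smul_single_one]

theorem qshₗ_consₗ_consₗ (x y : A) (X Y : List A →₀ ℚ) :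
    qshₗ (consₗ x X) (consₗ y Y) = consₗ x (qshₗ X (consₗ y Y)) + consₗ y (qshₗ (consₗ x X) Y)
      + consₗ (x * y) (qshₗ X Y) := by
  induction X using Finsupp.induction_linear with
  | zero => simp
  | add X X' hX hX' => simp only [map_add, LinearMap.add_apply, hX, hX']; abel
  | single u c =>
    induction Y using Finsupp.induction_linear with
    | zero => simp
    | add Y Y' hY hY' => simp only [map_add, hY, hY']; abel
    | single v d =>
      simp only [consₗ_single, qshₗ_single_single, qshW, map_smul, smul_add]
      rfl

/-- `phiConsW p m c z` is `φ_p (c :: z)` when the letter `c` stands for a block of `m` letters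
already merged into the first block. -/
noncomputable def phiConsW (p : ℕ → ℚ) (m : ℕ) (c : A) (z : List A) : List A →₀ ℚ :=
  ∑ k ∈ range (z.length + 1), p (k + m) • consₗ ((z.take k).foldl (· * ·) c) (phiW p (z.drop k))

noncomputable def phiConsₗ (p : ℕ → ℚ) (m : ℕ) (c : A) : (List A →₀ ℚ) →ₗ[ℚ] List A →₀ ℚ :=
  Finsupp.linearCombination ℚ (phiConsW p m c)

theorem phiW_cons_eq_phiConsW (p : ℕ → ℚ) (a : A) (w : List A) :
    phiW p (a :: w) = phiConsW p 1 a w := by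
  rw [phiW_cons_s11, phiConsW]

theorem phiₗ_consₗ (p : ℕ → ℚ) (a : A) (X : List A →₀ ℚ) :
    phiₗ p (consₗ a X) = phiConsₗ p 1 a X := by
  induction X using Finsupp.induction_linear with
  | zero => simp
  | add X X' hX hX' => rw [map_add, map_add, hX, hX', map_add]
  | single u c => simp [consₗ_single, phiConsₗ, phiW_cons_eq_phiConsW]

theorem phiConsW_cons (p : ℕ → ℚ) (m : ℕ) (c b : A) (z : List A) :
    phiConsW p m c (b :: z) = p m • consₗ c (phiW p (b :: z)) + phiConsW p (m + 1) (c * b) z := by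
  rw [phiConsW, phiConsW, List.length_cons, sum_range_succ', add_comm]
  simp only [List.take_succ_cons, List.drop_succ_cons, List.foldl_cons, List.take_zero,
    List.drop_zero, List.foldl_nil, zero_add, add_right_comm _ 1 m, add_assoc]

theorem phiConsₗ_consₗ (p : ℕ → ℚ) (m : ℕ) (c b : A) (X : List A →₀ ℚ) :
    phiConsₗ p m c (consₗ b X) =
      p m • consₗ c (phiₗ p (consₗ b X)) + phiConsₗ p (m + 1) (c * b) X := by
  induction X using Finsupp.induction_linear with
  | zero => simp
  | add X X' hX hX' => simp only [map_add, hX, hX', smul_add]; abel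
  | single u d =>
    simp only [consₗ_single, phiConsₗ, Finsupp.linearCombination_single, phiₗ_single,
      phiConsW_cons, smul_add, map_smul]
    rw [smul_comm]

theorem phiConsₗ_shW (p : ℕ → ℚ) : ∀ (u v : List A) (m : ℕ) (c : A),
    phiConsₗ p m c (shW u v) = ∑ i ∈ range (u.length + 1), ∑ j ∈ range (v.length + 1),
      (i + j).choose i • p (i + j + m) •
        consₗ ((u.take i ++ v.take j).foldl (· * ·) c) (phiₗ p (shW (u.drop i) (v.drop j)))
  | [], v, m, c => by
    simp [shW, phiConsₗ, phiConsW]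
  | a :: w, [], m, c => by
    simp [shW_nil_right, phiConsₗ, phiConsW]
  | a :: w, b :: t, m, c => by
    rw [shW_cons_cons, map_add, phiConsₗ_consₗ, phiConsₗ_consₗ, phiConsₗ_shW p w (b :: t),
      phiConsₗ_shW p (a :: w) t, List.length_cons, List.length_cons, add_add_add_comm]
    -- Pascal's rule: the first letter of the shuffle comes from `a :: w` or from `b :: t`.
    conv_rhs => rw [sum_range_choose_smul_pascal, add_assoc]
    congr 1
    · simp [shW_cons_cons]
    congr 1
    · refine sum_congr rfl fun i _ => sum_congr rfl fun j _ => ?_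
      simp only [List.take_succ_cons, List.drop_succ_cons, List.cons_append, List.foldl_cons,
        show i + 1 + j + m = i + j + (m + 1) by omega]
    · refine sum_congr rfl fun i _ => sum_congr rfl fun j _ => ?_
      simp only [List.take_succ_cons, List.drop_succ_cons, List.foldl_mul_append_cons,
        show i + (j + 1) + m = i + j + (m + 1) by omega]
termination_by u v => u.length + v.length

/-- For `Φ u v = φ_p u ⋆ φ_p v` this is the expansion of `φ_p (a w) ⋆ φ_p (b t)` by its first
letter, which is a block of `a w`, a block of `b t`, or the product of one of each. -/
noncomputable def firstBlockSum (p : ℕ → ℚ) (Φ : List A → List A → List A →₀ ℚ)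
    (a : A) (w : List A) (b : A) (t : List A) : List A →₀ ℚ :=
  ∑ i ∈ range (w.length + 1),
      p (i + 1) • consₗ ((w.take i).foldl (· * ·) a) (Φ (w.drop i) (b :: t))
    + ∑ j ∈ range (t.length + 1),
      p (j + 1) • consₗ ((t.take j).foldl (· * ·) b) (Φ (a :: w) (t.drop j))
    + ∑ i ∈ range (w.length + 1), ∑ j ∈ range (t.length + 1),
      (p (i + 1) * p (j + 1)) •
        consₗ ((w.take i).foldl (· * ·) a * (t.take j).foldl (· * ·) b) (Φ (w.drop i) (t.drop j))

theorem firstBlockSum_congr (p : ℕ → ℚ) {Φ Ψ : List A → List A → List A →₀ ℚ}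
    {a b : A} {w t : List A}
    (h : ∀ u v : List A, u.length + v.length < w.length + t.length + 2 → Φ u v = Ψ u v) :
    firstBlockSum p Φ a w b t = firstBlockSum p Ψ a w b t := by
  unfold firstBlockSum
  congr 1; congr 1
  all_goals refine sum_congr rfl fun i hi => ?_
  · rw [h _ _ (by simp; omega)]
  · rw [h _ _ (by simp; omega)]
  · exact sum_congr rfl fun j hj => by rw [h _ _ (by simp at hi hj ⊢; omega)]

theorem qshₗ_phiW_cons_cons (p : ℕ → ℚ) (a b : A) (w t : List A) :
    qshₗ (phiW p (a :: w)) (phiW p (b :: t)) =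
      firstBlockSum p (fun u v => qshₗ (phiW p u) (phiW p v)) a w b t := by
  simp only [firstBlockSum, phiW_cons_s11 p a w, phiW_cons_s11 p b t, map_sum, map_smul,
    LinearMap.sum_apply, LinearMap.smul_apply, qshₗ_consₗ_consₗ, smul_add, sum_add_distrib,
    smul_sum, smul_smul]
  refine congrArg₂ (· + ·) (congrArg₂ (· + ·) ?_ rfl) ?_
  all_goals
    rw [sum_comm]
    exact sum_congr rfl fun _ _ => sum_congr rfl fun _ _ => by rw [mul_comm]

theorem phiₗ_shW_cons_cons (p : ℕ → ℚ)
    (hp : ∀ i j, ((i + j).choose i : ℚ) * p (i + j) = p i * p j) (a b : A) (w t : List A) :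
    phiₗ p (shW (a :: w) (b :: t)) =
      firstBlockSum p (fun u v => phiₗ p (shW u v)) a w b t := by
  have hleft : phiConsₗ p 1 a (shW w (b :: t)) =
      ∑ i ∈ range (w.length + 1),
        p (i + 1) • consₗ ((w.take i).foldl (· * ·) a) (phiₗ p (shW (w.drop i) (b :: t)))
      + ∑ i ∈ range (w.length + 1), ∑ j ∈ range (t.length + 1),
        (((i + (j + 1)).choose i : ℚ) * p (i + j + 2)) •
          consₗ ((w.take i).foldl (· * ·) a * (t.take j).foldl (· * ·) b)
            (phiₗ p (shW (w.drop i) (t.drop j))) := by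
    rw [phiConsₗ_shW, ← sum_add_distrib]
    refine sum_congr rfl fun i _ => ?_
    rw [List.length_cons, sum_range_succ', add_comm (∑ j ∈ _, _)]
    congr 1
    · simp
    · refine sum_congr rfl fun j _ => ?_
      rw [← Nat.cast_smul_eq_nsmul ℚ, smul_smul]
      simp only [List.take_succ_cons, List.drop_succ_cons, List.foldl_mul_append_cons,
        List.foldl_mul_append, show i + (j + 1) + 1 = i + j + 2 by omega]
  have hright : phiConsₗ p 1 b (shW (a :: w) t) =
      ∑ j ∈ range (t.length + 1),
        p (j + 1) • consₗ ((t.take j).foldl (· * ·) b) (phiₗ p (shW (a :: w) (t.drop j)))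
      + ∑ i ∈ range (w.length + 1), ∑ j ∈ range (t.length + 1),
        (((i + 1 + j).choose (i + 1) : ℚ) * p (i + j + 2)) •
          consₗ ((w.take i).foldl (· * ·) a * (t.take j).foldl (· * ·) b)
            (phiₗ p (shW (w.drop i) (t.drop j))) := by
    rw [phiConsₗ_shW, List.length_cons, sum_range_succ', add_comm (∑ i ∈ _, _)]
    congr 1
    · exact sum_congr rfl fun j _ => by simp
    · refine sum_congr rfl fun i _ => sum_congr rfl fun j _ => ?_
      rw [← Nat.cast_smul_eq_nsmul ℚ, smul_smul]
      simp only [List.take_succ_cons, List.drop_succ_cons, List.cons_append, List.foldl_cons,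
        mul_comm b a, List.foldl_mul_append, show i + 1 + j + 1 = i + j + 2 by omega]
  rw [shW_cons_cons, map_add, phiₗ_consₗ, phiₗ_consₗ, hleft, hright, firstBlockSum,
    add_add_add_comm, ← sum_add_distrib]
  congr 1
  refine sum_congr rfl fun i _ => ?_
  rw [← sum_add_distrib]
  refine sum_congr rfl fun j _ => ?_
  rw [← add_smul, ← add_mul, ← hp (i + 1) (j + 1), Nat.choose_succ_add_succ, Nat.cast_add,
    show i + 1 + (j + 1) = i + j + 2 by omega]

theorem phiₗ_shW (p : ℕ → ℚ) (hp : ∀ i j, ((i + j).choose i : ℚ) * p (i + j) = p i * p j) :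
    ∀ u v : List A, phiₗ p (shW u v) = qshₗ (phiW p u) (phiW p v)
  | [], v => by rw [shW, phiₗ_single, one_smul, phiW.eq_1 p, qshₗ_single_nil_left]
  | a :: w, [] => by rw [shW_nil_right, phiₗ_single, one_smul, phiW.eq_1 p, qshₗ_single_nil_right]
  | a :: w, b :: t => by
    rw [phiₗ_shW_cons_cons p hp, qshₗ_phiW_cons_cons]
    exact firstBlockSum_congr p fun u v _ => phiₗ_shW p hp u v
termination_by u v => u.length + v.length

theorem phi_shL (p : ℕ → ℚ) (hp : ∀ i j, ((i + j).choose i : ℚ) * p (i + j) = p i * p j)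
    (x y : List A →₀ ℚ) : phi p (shL x y) = qshL (phi p x) (phi p y) := by
  have hbilin : (shₗ (α := A)).compr₂ (phiₗ p) = qshₗ.compl₁₂ (phiₗ p) (phiₗ p) := by
    ext u v
    simp [shₗ, phiₗ_shW p hp]
  rw [phi_eq_phiₗ, phi_eq_phiₗ, phi_eq_phiₗ, shL_eq_shₗ, qshL_eq_qshₗ]
  exact LinearMap.congr_fun₂ hbilin x y

end

/-- The Hoffman isomorphism `φ_{E₁}` (with coefficients `1/n!`) intertwines the
shuffle and quasi-shuffle products: `φ_{E₁}(x ⧢ y) = φ_{E₁}(x) ⋆ φ_{E₁}(y)`. -/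
theorem hoffman_isomorphism (x y : List A →₀ ℚ) :
    phi (fun n => (n.factorial : ℚ)⁻¹) (shL x y) =
      qshL (phi (fun n => (n.factorial : ℚ)⁻¹) x)
        (phi (fun n => (n.factorial : ℚ)⁻¹) y) :=
  phi_shL _ Nat.cast_add_choose_mul_inv_factorial x y
end
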